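/- arXiv:1903.11746 — 8 statements merged into one kernel-verified Lean document; each statement's English description precedes it below -/
import Mathlib

section
/- For any closed subset A of X, the closure of A in the space X +_f Y equals A ∪ f(A). -/
open Set Topology

variable {X Y : Type*} [TopologicalSpace X] [TopologicalSpace Y]

/-- A map on subsets is *admissible* if it sends closed sets to closed sets,
the empty set to the empty set, and is finitely additive on closed sets. -/
def Admissible (f : Set X → Set Y) : Prop :=
  (∀ A : Set X, IsClosed A → IsClosed (f A)) ∧ f ∅ = ∅ ∧
    ∀ A B : Set X, IsClosed A → IsClosed B → f (A ∪ B) = f A ∪ f B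

/-- The defining condition for a subset of `X ⊕ Y` to be closed in the sum space `X +_f Y`. -/
def SumClosed (f : Set X → Set Y) (A : Set (X ⊕ Y)) : Prop :=
  IsClosed (Sum.inl ⁻¹' A) ∧ IsClosed (Sum.inr ⁻¹' A) ∧
    f (Sum.inl ⁻¹' A) ⊆ Sum.inr ⁻¹' A

theorem Admissible.mono {f : Set X → Set Y} (hf : Admissible f) {A B : Set X}
    (hA : IsClosed A) (hB : IsClosed B) (hAB : A ⊆ B) : f A ⊆ f B := by
  have h := hf.2.2 A B hA hB
  rw [union_eq_right.mpr hAB] at h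
  rw [h]; exact subset_union_left

/-- The sum space `X +_f Y`. -/
def sumTopology (f : Set X → Set Y) (hf : Admissible f) : TopologicalSpace (X ⊕ Y) where
  IsOpen s := SumClosed f sᶜ
  isOpen_univ := by
    refine ⟨?_, ?_, ?_⟩ <;> simp [hf.2.1]
  isOpen_inter := by
    rintro s t ⟨hs1, hs2, hs3⟩ ⟨ht1, ht2, ht3⟩
    refine ⟨?_, ?_, ?_⟩
    · simpa [compl_inter, preimage_union] using hs1.union ht1
    · simpa [compl_inter, preimage_union] using hs2.union ht2
    · rw [compl_inter, preimage_union, preimage_union, hf.2.2 _ _ hs1 ht1]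
      exact union_subset_union hs3 ht3
  isOpen_sUnion := by
    intro S hS
    have hc : (⋃₀ S)ᶜ = ⋂ s ∈ S, sᶜ := by
      rw [compl_sUnion, sInter_image]
    have h1 : IsClosed (Sum.inl ⁻¹' (⋃₀ S)ᶜ) := by
      rw [hc, preimage_iInter₂]
      exact isClosed_biInter fun s hs => (hS s hs).1
    have h2 : IsClosed (Sum.inr ⁻¹' (⋃₀ S)ᶜ) := by
      rw [hc, preimage_iInter₂]
      exact isClosed_biInter fun s hs => (hS s hs).2.1
    refine ⟨h1, h2, ?_⟩
    rw [hc, preimage_iInter₂, preimage_iInter₂]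
    refine subset_iInter₂ fun s hs => ?_
    have h1' : IsClosed (⋂ i ∈ S, Sum.inl ⁻¹' iᶜ) := by
      exact isClosed_biInter fun i hi => (hS i hi).1
    calc f (⋂ i ∈ S, Sum.inl ⁻¹' iᶜ) ⊆ f (Sum.inl ⁻¹' sᶜ) :=
          hf.mono h1' (hS s hs).1 (iInter₂_subset s hs)
      _ ⊆ Sum.inr ⁻¹' sᶜ := (hS s hs).2.2

theorem isClosed_sumTopology {f : Set X → Set Y} (hf : Admissible f) (A : Set (X ⊕ Y)) :
    IsClosed[sumTopology f hf] A ↔ SumClosed f A := by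
  rw [← @isOpen_compl_iff _ _ (sumTopology f hf)]
  show SumClosed f Aᶜᶜ ↔ _
  rw [compl_compl]

theorem SumClosed.subset_preimage_inr_of_subset {f : Set X → Set Y} (hf : Admissible f)
    {C : Set (X ⊕ Y)} (hC : SumClosed f C) {A : Set X} (hA : IsClosed A)
    (hAC : A ⊆ Sum.inl ⁻¹' C) : f A ⊆ Sum.inr ⁻¹' C :=
  (hf.mono hA hC.1 hAC).trans hC.2.2

theorem sumClosed_image_inl_union_image_inr {f : Set X → Set Y} (hf : Admissible f)
    {A : Set X} (hA : IsClosed A) : SumClosed f (Sum.inl '' A ∪ Sum.inr '' f A) := by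
  have hinl : Sum.inl ⁻¹' (Sum.inl '' A ∪ Sum.inr '' f A) = A := by
    simp [preimage_union, Sum.inl_injective.preimage_image]
  have hinr : Sum.inr ⁻¹' (Sum.inl '' A ∪ Sum.inr '' f A) = f A := by
    simp [preimage_union, Sum.inr_injective.preimage_image]
  rw [SumClosed, hinl, hinr]
  exact ⟨hA, hf.1 A hA, subset_rfl⟩

/-- for closed `A ⊆ X`, the closure of `A` in `X +_f Y` is `A ∪ f A`. -/
theorem statement1 (f : Set X → Set Y) (hf : Admissible f)
    (A : Set X) (hA : IsClosed A) :
    @closure _ (sumTopology f hf) (Sum.inl '' A) = Sum.inl '' A ∪ Sum.inr '' f A := by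
  let _ := sumTopology f hf
  refine subset_antisymm (closure_minimal subset_union_left ?_) (union_subset subset_closure ?_)
  · exact (isClosed_sumTopology hf _).2 (sumClosed_image_inl_union_image_inr hf hA)
  · have hcl : SumClosed f (closure (Sum.inl '' A)) :=
      (isClosed_sumTopology hf _).1 isClosed_closure
    rw [image_subset_iff]
    exact hcl.subset_preimage_inr_of_subset hf hA (image_subset_iff.1 subset_closure)
end

section
/- Let Z be a topological space with underlying set X ⊔ Y such that X is open in Z and both X and Y carry the subspace topologies. Define f : Closed(X) → Closed(Y) by f(A) = Cl_Z(A) ∩ Y. Then f is admissible and the topology of Z coincides with that of X +_f Y. -/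
open Set Topology

variable {X Y : Type*} [TopologicalSpace X] [TopologicalSpace Y]

/- The closure of `A ∪ B` is the union of the closures, which gives admissibility.
For the topologies, a set `C` of `Z` is closed exactly when its traces on `X` and on `Y` are
closed and `Cl_Z(C ∩ X) ∩ Y ⊆ C`: the closure of `C ∩ Y` stays in `C` because `Y` is closed in
`Z`, and the closure of `C ∩ X` meets `X` only in `C ∩ X` because `X` is a subspace. -/

theorem admissible_preimage_closure_image {Z : Type*} [TopologicalSpace Z] (i : X → Z)
    {j : Y → Z} (hj : Continuous j) : Admissible fun A : Set X => j ⁻¹' closure (i '' A) :=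
  ⟨fun _ _ => isClosed_closure.preimage hj, by simp,
    fun A B _ _ => by simp only [image_union, closure_union, preimage_union]⟩

theorem isClosed_iff_of_isEmbedding_of_isClosedEmbedding {Z : Type*} [TopologicalSpace Z]
    {i : X → Z} {j : Y → Z} (hi : IsEmbedding i) (hj : IsClosedEmbedding j)
    (hcover : range i ∪ range j = univ) {C : Set Z} :
    IsClosed C ↔ IsClosed (i ⁻¹' C) ∧ IsClosed (j ⁻¹' C) ∧
      j ⁻¹' closure (i '' (i ⁻¹' C)) ⊆ j ⁻¹' C := by
  constructor
  · intro hC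
    refine ⟨hC.preimage hi.continuous, hC.preimage hj.continuous, preimage_mono ?_⟩
    exact closure_minimal (image_preimage_subset i C) hC
  rintro ⟨hCi, hCj, hclosure⟩
  have hsplit : C = i '' (i ⁻¹' C) ∪ j '' (j ⁻¹' C) := by
    rw [image_preimage_eq_inter_range, image_preimage_eq_inter_range, ← inter_union_distrib_left,
      hcover, inter_univ]
  have hclosure_i : closure (i '' (i ⁻¹' C)) ⊆ C := by
    intro z hz
    have hz' : z ∈ range i ∪ range j := hcover ▸ mem_univ z
    rcases hz' with ⟨x, rfl⟩ | ⟨y, rfl⟩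
    · rwa [← mem_preimage, ← hi.closure_eq_preimage_closure_image, hCi.closure_eq] at hz
    · exact hclosure hz
  rw [← closure_subset_iff_isClosed, hsplit, closure_union,
    (hj.isClosedMap _ hCj).closure_eq, ← hsplit]
  exact union_subset hclosure_i (image_preimage_subset j C)

/-- if `Z` is a topology on `X ⊕ Y` in which `X` is open and `X`, `Y`
carry the subspace topologies, then `f A := Cl_Z(A) ∩ Y` is admissible and the
topology of `Z` coincides with that of `X +_f Y`. -/
theorem statement4 (t : TopologicalSpace (X ⊕ Y))
    (hopen : IsOpen[t] (Set.range Sum.inl))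
    (hX : TopologicalSpace.induced Sum.inl t = (inferInstance : TopologicalSpace X))
    (hY : TopologicalSpace.induced Sum.inr t = (inferInstance : TopologicalSpace Y))
    (f : Set X → Set Y)
    (hfdef : ∀ A : Set X, f A = Sum.inr ⁻¹' (@closure _ t (Sum.inl '' A))) :
    Admissible f ∧ ∀ s : Set (X ⊕ Y), IsOpen[t] s ↔ SumClosed f sᶜ := by
  let _ := t
  obtain rfl : f = fun A => Sum.inr ⁻¹' closure (Sum.inl '' A) := funext hfdef
  have hinl : IsEmbedding (Sum.inl : X → X ⊕ Y) := ⟨⟨hX.symm⟩, Sum.inl_injective⟩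
  have hinr : IsClosedEmbedding (Sum.inr : Y → X ⊕ Y) :=
    ⟨⟨⟨hY.symm⟩, Sum.inr_injective⟩, by rwa [← compl_range_inl, isClosed_compl_iff]⟩
  refine ⟨admissible_preimage_closure_image _ hinr.continuous, fun s => ?_⟩
  rw [← isClosed_compl_iff]
  exact isClosed_iff_of_isEmbedding_of_isClosedEmbedding hinl hinr range_inl_union_range_inr
end

section
/- If the sum space X +_f Y is Hausdorff, then f(K) = ∅ for every compact subset K of X. -/
open Set Topology

variable {X Y : Type*} [TopologicalSpace X] [TopologicalSpace Y]

theorem continuous_inl_sumTopology {f : Set X → Set Y} (hf : Admissible f) :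
    Continuous[_, sumTopology f hf] (Sum.inl : X → X ⊕ Y) :=
  (@continuous_iff_isClosed _ _ _ (sumTopology f hf) _).2 fun s hs =>
    ((isClosed_sumTopology hf s).1 hs).1

theorem isClosed_image_inl_iff {f : Set X → Set Y} (hf : Admissible f) {A : Set X} :
    IsClosed[sumTopology f hf] (Sum.inl '' A : Set (X ⊕ Y)) ↔ IsClosed A ∧ f A = ∅ := by
  rw [isClosed_sumTopology, SumClosed, preimage_image_eq _ Sum.inl_injective,
    preimage_inr_image_inl, subset_empty_iff]
  simp only [isClosed_empty, true_and]

/-- if `X +_f Y` is Hausdorff, then `f K = ∅` for every compact `K ⊆ X`. -/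
theorem statement6 (f : Set X → Set Y) (hf : Admissible f)
    (h2 : @T2Space _ (sumTopology f hf)) :
    ∀ K : Set X, IsCompact K → f K = ∅ := by
  intro K hK
  let _ := sumTopology f hf
  have hKc : IsCompact (Sum.inl '' K : Set (X ⊕ Y)) := hK.image (continuous_inl_sumTopology hf)
  exact ((isClosed_image_inl_iff hf).1 hKc.isClosed).2
end

section
/- Given continuous maps π : Y → X and ϖ : Z → W, define the pullback f* : Closed(Y) → Closed(Z) by f*(A) = ϖ⁻¹(f(Cl_X(π(A)))). Then f* is admissible and the map π + ϖ : Y +_{f*} Z → X +_f W is continuous. -/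
open Set Topology

variable {X Y : Type*} [TopologicalSpace X] [TopologicalSpace Y]

section

variable {Z W : Type*} [TopologicalSpace Z] [TopologicalSpace W]

theorem Admissible.closure_image {f : Set X → Set W} (hf : Admissible f) (π : Y → X) :
    Admissible fun A : Set Y => f (closure (π '' A)) := by
  refine ⟨fun A _ => hf.1 _ isClosed_closure, by simp [hf.2.1], fun A B _ _ => ?_⟩
  simp only [image_union, closure_union]
  exact hf.2.2 _ _ isClosed_closure isClosed_closure

theorem Admissible.preimage {f : Set X → Set W} (hf : Admissible f) {ϖ : Z → W}
    (hϖ : Continuous ϖ) : Admissible fun A : Set X => ϖ ⁻¹' f A :=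
  ⟨fun A hA => (hf.1 A hA).preimage hϖ, by simp [hf.2.1],
    fun A B hA hB => by simp only [hf.2.2 A B hA hB, preimage_union]⟩

theorem continuous_sumMap_sumTopology {f : Set X → Set W} (hf : Admissible f)
    {g : Set Y → Set Z} (hg : Admissible g) {π : Y → X} {ϖ : Z → W} (hπ : Continuous π)
    (hϖ : Continuous ϖ) (hgf : ∀ A : Set X, IsClosed A → g (π ⁻¹' A) ⊆ ϖ ⁻¹' f A) :
    Continuous[sumTopology g hg, sumTopology f hf] (Sum.map π ϖ) := by
  let := sumTopology g hg
  let := sumTopology f hf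
  refine continuous_iff_isClosed.mpr fun s hs => ?_
  obtain ⟨hs_inl, hs_inr, hs_sub⟩ := (isClosed_sumTopology hf s).mp hs
  exact (isClosed_sumTopology hg _).mpr
    ⟨hs_inl.preimage hπ, hs_inr.preimage hϖ, (hgf _ hs_inl).trans (preimage_mono hs_sub)⟩

end

/-- the pullback `f*` is admissible and `π + ϖ : Y +_{f*} Z → X +_f W`
is continuous. -/
theorem statement11 {Z W : Type*} [TopologicalSpace Z] [TopologicalSpace W]
    (f : Set X → Set W) (hf : Admissible f)
    (π : Y → X) (ϖ : Z → W) (hπ : Continuous π) (hϖ : Continuous ϖ) :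
    Admissible (fun A : Set Y => ϖ ⁻¹' (f (closure (π '' A)))) ∧
      ∀ hstar : Admissible (fun A : Set Y => ϖ ⁻¹' (f (closure (π '' A)))),
        Continuous[sumTopology (fun A : Set Y => ϖ ⁻¹' (f (closure (π '' A)))) hstar,
          sumTopology f hf] (Sum.map π ϖ) := by
  refine ⟨(hf.closure_image π).preimage hϖ,
    fun hstar => continuous_sumMap_sumTopology hf hstar hπ hϖ fun A hA => ?_⟩
  have hclosure : closure (π '' (π ⁻¹' A)) ⊆ A := closure_minimal (image_preimage_subset π A) hA
  exact preimage_mono (hf.mono isClosed_closure hA hclosure)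
end

section
/- The pullback topology is the coarsest among topologies extending those of Y and Z making π + ϖ continuous: if f' : Closed(Y) → Closed(Z) is any admissible map such that π + ϖ : Y +_{f'} Z → X +_f W is continuous, then the identity map Y +_{f'} Z → Y +_{f*} Z is continuous, i.e. f'(A) ⊆ f*(A) for all closed A ⊆ Y. -/
/-! For closed `A ⊆ Y` put `C = cl(π A)`. The set `C + f C` is closed in `X +_f W`, so its preimage
`π⁻¹ C + ϖ⁻¹ (f C)` under `π + ϖ` is closed in `Y +_{f'} Z`, which says
`f' (π⁻¹ C) ⊆ ϖ⁻¹ (f C)`; as `A ⊆ π⁻¹ C`, monotonicity of `f'` gives `f' A ⊆ f* A`. -/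

open Set Topology

variable {X Y : Type*} [TopologicalSpace X] [TopologicalSpace Y]

section

variable {Z W : Type*} [TopologicalSpace Z] [TopologicalSpace W]

theorem continuous_id_sumTopology_of_le {g g' : Set Y → Set Z} (hg : Admissible g)
    (hg' : Admissible g') (hle : ∀ A : Set Y, IsClosed A → g A ⊆ g' A) :
    Continuous[sumTopology g hg, sumTopology g' hg'] id := by
  refine @continuous_iff_isClosed _ _ (sumTopology g hg) (sumTopology g' hg') _ |>.mpr ?_
  intro S hS
  rw [isClosed_sumTopology] at hS ⊢
  exact ⟨hS.1, hS.2.1, (hle _ hS.1).trans hS.2.2⟩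

theorem sumClosed_inl_image_union_inr_image {g : Set X → Set W} (hg : Admissible g)
    {C : Set X} (hC : IsClosed C) : SumClosed g (Sum.inl '' C ∪ Sum.inr '' g C) := by
  simp only [SumClosed, preimage_union, preimage_inl_image_inr, preimage_inr_image_inl,
    Sum.inl_injective.preimage_image, Sum.inr_injective.preimage_image, union_empty,
    empty_union]
  exact ⟨hC, hg.1 C hC, subset_rfl⟩

theorem isClosed_preimage_and_subset_of_continuous_sumMap {f : Set X → Set W}
    (hf : Admissible f) {π : Y → X} {ϖ : Z → W} {f' : Set Y → Set Z} (hf' : Admissible f')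
    (hcont : Continuous[sumTopology f' hf', sumTopology f hf] (Sum.map π ϖ))
    {C : Set X} (hC : IsClosed C) :
    IsClosed (π ⁻¹' C) ∧ f' (π ⁻¹' C) ⊆ ϖ ⁻¹' f C := by
  have hS : IsClosed[sumTopology f hf] (Sum.inl '' C ∪ Sum.inr '' f C) :=
    (isClosed_sumTopology hf _).mpr (sumClosed_inl_image_union_inr_image hf hC)
  have hpre := (isClosed_sumTopology hf' _).mp
    (@IsClosed.preimage _ _ (sumTopology f' hf') (sumTopology f hf) _ hcont _ hS)
  have hinl : Sum.inl ⁻¹' (Sum.map π ϖ ⁻¹' (Sum.inl '' C ∪ Sum.inr '' f C)) = π ⁻¹' C := by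
    ext; simp
  have hinr : Sum.inr ⁻¹' (Sum.map π ϖ ⁻¹' (Sum.inl '' C ∪ Sum.inr '' f C)) = ϖ ⁻¹' f C := by
    ext; simp
  rw [SumClosed, hinl, hinr] at hpre
  exact ⟨hpre.1, hpre.2.2⟩

end

theorem statement12_general {Z W : Type*} [TopologicalSpace Z] [TopologicalSpace W]
    (f : Set X → Set W) (hf : Admissible f)
    (π : Y → X) (ϖ : Z → W)
    (hstar : Admissible (fun A : Set Y => ϖ ⁻¹' (f (closure (π '' A)))))
    (f' : Set Y → Set Z) (hf' : Admissible f')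
    (hcont : Continuous[sumTopology f' hf', sumTopology f hf] (Sum.map π ϖ)) :
    Continuous[sumTopology f' hf',
        sumTopology (fun A : Set Y => ϖ ⁻¹' (f (closure (π '' A)))) hstar] id ∧
      ∀ A : Set Y, IsClosed A → f' A ⊆ ϖ ⁻¹' (f (closure (π '' A))) := by
  have hle : ∀ A : Set Y, IsClosed A → f' A ⊆ ϖ ⁻¹' (f (closure (π '' A))) := by
    intro A hA
    obtain ⟨hclosed, hsub⟩ :=
      isClosed_preimage_and_subset_of_continuous_sumMap hf hf' hcont isClosed_closure
    exact (hf'.mono hA hclosed (image_subset_iff.mp subset_closure)).trans hsub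
  exact ⟨continuous_id_sumTopology_of_le hf' hstar hle, hle⟩

/-- the pullback topology is the coarsest one making `π + ϖ` continuous. -/
theorem statement12 {Z W : Type*} [TopologicalSpace Z] [TopologicalSpace W]
    (f : Set X → Set W) (hf : Admissible f)
    (π : Y → X) (ϖ : Z → W) (hπ : Continuous π) (hϖ : Continuous ϖ)
    (hstar : Admissible (fun A : Set Y => ϖ ⁻¹' (f (closure (π '' A)))))
    (f' : Set Y → Set Z) (hf' : Admissible f')
    (hcont : Continuous[sumTopology f' hf', sumTopology f hf] (Sum.map π ϖ)) :
    Continuous[sumTopology f' hf',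
        sumTopology (fun A : Set Y => ϖ ⁻¹' (f (closure (π '' A)))) hstar] id ∧
      ∀ A : Set Y, IsClosed A → f' A ⊆ ϖ ⁻¹' (f (closure (π '' A))) :=
  statement12_general f hf π ϖ hstar f' hf' hcont
end

section
/- Let X +_f Y be a sum space, X₁ ⊆ X and Y₁ ⊆ Y. Then the subspace topology on X₁ ∪ Y₁ inside X +_f Y coincides with the topology of X₁ +_{f₁} Y₁, where f₁(A) = f(Cl_X(A)) ∩ Y₁ is the pullback of f along the inclusion maps. -/
open Set Topology

variable {X Y : Type*} [TopologicalSpace X] [TopologicalSpace Y]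

/-- the subspace topology on `X₁ ∪ Y₁` inside `X +_f Y` coincides with
the topology of `X₁ +_{f₁} Y₁`, where `f₁` is the pullback of `f` along the inclusions. -/
theorem statement16 (f : Set X → Set Y) (hf : Admissible f)
    (X₁ : Set X) (Y₁ : Set Y)
    (f₁ : Set X₁ → Set Y₁)
    (hf₁def : ∀ A : Set X₁,
      f₁ A = (Subtype.val ⁻¹' (f (closure (Subtype.val '' A))) : Set Y₁))
    (hf₁ : Admissible f₁) :
    sumTopology f₁ hf₁ =
      TopologicalSpace.induced (Sum.map Subtype.val Subtype.val) (sumTopology f hf) := by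
  letI := sumTopology f hf
  refine TopologicalSpace.ext_isClosed fun A => ?_
  rw [isClosed_sumTopology, isClosed_induced_iff]
  constructor
  · rintro ⟨h1, h2, h3⟩
    set S := closure (Subtype.val '' (Sum.inl ⁻¹' A)) with hS
    set T := closure (Subtype.val '' (Sum.inr ⁻¹' A)) ∪ f (closure (Subtype.val '' (Sum.inl ⁻¹' A))) with hT
    have hpl : Sum.inl ⁻¹' (Sum.inl '' S ∪ Sum.inr '' T) = S := by ext x; simp
    have hpr : Sum.inr ⁻¹' (Sum.inl '' S ∪ Sum.inr '' T) = T := by ext y; simp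
    have keyl : ∀ x : X₁, ((x : X) ∈ closure (Subtype.val '' (Sum.inl ⁻¹' A)) ↔ Sum.inl x ∈ A) := by
      intro x
      rw [← closure_subtype, h1.closure_eq]; rfl
    have keyr : ∀ y : Y₁, ((y : Y) ∈ closure (Subtype.val '' (Sum.inr ⁻¹' A)) ↔ Sum.inr y ∈ A) := by
      intro y
      rw [← closure_subtype, h2.closure_eq]; rfl
    refine ⟨Sum.inl '' S ∪ Sum.inr '' T, (isClosed_sumTopology hf _).mpr ⟨?_, ?_, ?_⟩, ?_⟩
    · rw [hpl]; exact isClosed_closure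
    · rw [hpr]; exact isClosed_closure.union (hf.1 _ isClosed_closure)
    · rw [hpl, hpr, hT]; exact subset_union_right
    · ext z
      cases z with
      | inl x =>
        have : Sum.inl (x : X) ∈ Sum.inl '' S ∪ Sum.inr '' T ↔ (x : X) ∈ S := by simp
        simp only [mem_preimage, Sum.map_inl, this]
        simp only [hS]
        exact keyl x
      | inr y =>
        have : Sum.inr (y : Y) ∈ Sum.inl '' S ∪ Sum.inr '' T ↔ (y : Y) ∈ T := by simp
        simp only [mem_preimage, Sum.map_inr, this]
        simp only [hT, mem_union]
        constructor
        · rintro (hy | hy)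
          · exact (keyr y).mp hy
          · have hy' : y ∈ f₁ (Sum.inl ⁻¹' A) := by rw [hf₁def]; exact hy
            exact h3 hy'
        · intro hy
          exact Or.inl ((keyr y).mpr hy)
  · rintro ⟨C, hC, rfl⟩
    rw [isClosed_sumTopology] at hC
    obtain ⟨h1, h2, h3⟩ := hC
    have hpl : Sum.inl ⁻¹' (Sum.map (Subtype.val : X₁ → X) (Subtype.val : Y₁ → Y) ⁻¹' C)
        = Subtype.val ⁻¹' (Sum.inl ⁻¹' C) := rfl
    have hpr : Sum.inr ⁻¹' (Sum.map (Subtype.val : X₁ → X) (Subtype.val : Y₁ → Y) ⁻¹' C)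
        = Subtype.val ⁻¹' (Sum.inr ⁻¹' C) := rfl
    refine ⟨?_, ?_, ?_⟩
    · rw [hpl]; exact h1.preimage continuous_subtype_val
    · rw [hpr]; exact h2.preimage continuous_subtype_val
    · rw [hpl, hpr, hf₁def]
      have hsub : closure (Subtype.val '' (Subtype.val ⁻¹' (Sum.inl ⁻¹' C) : Set X₁))
          ⊆ Sum.inl ⁻¹' C :=
        h1.closure_subset_iff.mpr (image_preimage_subset _ _)
      exact preimage_mono ((hf.mono isClosed_closure h1 hsub).trans h3)
end

section
/- Let X be a connected, locally connected, locally compact Hausdorff space. Then for every compact K ⊆ X there exists a compact connected K' ⊆ X with K ⊆ K'. -/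
/-!
Around every point there is a compact connected neighbourhood: the component of the point in
the interior of a compact neighbourhood is open, and its component in the whole compact
neighbourhood is compact. Hence "lying in a common compact connected set" is a relation with
open classes, so in a connected space it relates any two points. Fixing a base point `x₀`, the
compact connected sets through `x₀` are closed under binary unions and their interiors cover
the space, so a compact set lies in the interior of a single one of them.
-/

open Set Topology

section

variable {X : Type*} [TopologicalSpace X]

theorem IsCompact.connectedComponentIn {s : Set X} (hs : IsCompact s) (x : X) :
    IsCompact (connectedComponentIn s x) := by
  by_cases hx : x ∈ s
  · rw [connectedComponentIn_eq_image hx]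
    have : CompactSpace s := isCompact_iff_compactSpace.mp hs
    exact isClosed_connectedComponent.isCompact.image continuous_subtype_val
  · rw [connectedComponentIn_eq_empty hx]
    exact isCompact_empty

section LocallyConnected

variable [WeaklyLocallyCompactSpace X] [LocallyConnectedSpace X]

theorem exists_isCompact_isConnected_mem_nhds (x : X) :
    ∃ C, IsCompact C ∧ IsConnected C ∧ C ∈ 𝓝 x := by
  obtain ⟨C₀, hC₀, hC₀x⟩ := exists_compact_mem_nhds x
  have hint : connectedComponentIn (interior C₀) x ∈ 𝓝 x :=
    connectedComponentIn_mem_nhds (interior_mem_nhds.mpr hC₀x)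
  refine ⟨connectedComponentIn C₀ x, hC₀.connectedComponentIn x,
    isConnected_connectedComponentIn_iff.mpr (mem_of_mem_nhds hC₀x), ?_⟩
  exact Filter.mem_of_superset hint (connectedComponentIn_mono x interior_subset)

theorem exists_isCompact_isConnected_mem_mem [PreconnectedSpace X] (x y : X) :
    ∃ C, IsCompact C ∧ IsConnected C ∧ x ∈ C ∧ y ∈ C := by
  let P : X → X → Prop := fun x y ↦ ∃ C, IsCompact C ∧ IsConnected C ∧ x ∈ C ∧ y ∈ C
  have hsymm : Std.Symm P := ⟨fun _ _ ⟨C, hC, hCc, hx, hy⟩ ↦ ⟨C, hC, hCc, hy, hx⟩⟩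
  have htrans : IsTrans X P := ⟨fun _ y _ ⟨C, hC, hCc, hx, hy⟩ ⟨D, hD, hDc, hy', hz⟩ ↦
    ⟨C ∪ D, hC.union hD, hCc.union ⟨y, hy, hy'⟩ hDc, Or.inl hx, Or.inr hz⟩⟩
  refine PreconnectedSpace.induction₂ P (fun z ↦ ?_) htrans x y
  obtain ⟨D, hD, hDc, hDz⟩ := exists_isCompact_isConnected_mem_nhds z
  filter_upwards [hDz] with w hw
  exact ⟨D, hD, hDc, mem_of_mem_nhds hDz, hw⟩

theorem IsCompact.exists_isCompact_isConnected_insert_subset [PreconnectedSpace X] {K : Set X}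
    (hK : IsCompact K) (x₀ : X) :
    ∃ K', IsCompact K' ∧ IsConnected K' ∧ insert x₀ K ⊆ K' := by
  let ι := {C : Set X // IsCompact C ∧ IsConnected C ∧ x₀ ∈ C}
  have : Nonempty ι := ⟨⟨{x₀}, isCompact_singleton, isConnected_singleton, rfl⟩⟩
  have hcover : K ⊆ ⋃ C : ι, interior C.1 := fun x _ ↦ by
    obtain ⟨C, hC, hCc, hx₀, hx⟩ := exists_isCompact_isConnected_mem_mem x₀ x
    obtain ⟨D, hD, hDc, hDx⟩ := exists_isCompact_isConnected_mem_nhds x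
    refine mem_iUnion.mpr ⟨⟨C ∪ D, hC.union hD, hCc.union ⟨x, hx, mem_of_mem_nhds hDx⟩ hDc,
      Or.inl hx₀⟩, ?_⟩
    exact interior_mono subset_union_right (mem_interior_iff_mem_nhds.mpr hDx)
  have hdirected : Directed (· ⊆ ·) fun C : ι ↦ interior C.1 :=
    fun ⟨C, hC, hCc, hC₀⟩ ⟨D, hD, hDc, hD₀⟩ ↦
      ⟨⟨C ∪ D, hC.union hD, hCc.union ⟨x₀, hC₀, hD₀⟩ hDc, Or.inl hC₀⟩,
        interior_mono subset_union_left, interior_mono subset_union_right⟩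
  obtain ⟨⟨C, hC, hCc, hC₀⟩, hKC⟩ :=
    hK.elim_directed_cover _ (fun _ ↦ isOpen_interior) hcover hdirected
  exact ⟨C, hC, hCc, insert_subset hC₀ (hKC.trans interior_subset)⟩

end LocallyConnected

end

theorem statement18_general {X : Type*} [TopologicalSpace X] [ConnectedSpace X]
    [LocallyConnectedSpace X] [LocallyCompactSpace X]
    (K : Set X) (hK : IsCompact K) :
    ∃ K' : Set X, IsCompact K' ∧ IsConnected K' ∧ K ⊆ K' := by
  obtain ⟨x₀⟩ : Nonempty X := inferInstance
  obtain ⟨K', hK', hK'c, hsub⟩ := hK.exists_isCompact_isConnected_insert_subset x₀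
  exact ⟨K', hK', hK'c, (subset_insert x₀ K).trans hsub⟩

/-- in a connected, locally connected, locally compact Hausdorff space,
every compact set is contained in a compact connected set. -/
theorem statement18 {X : Type*} [TopologicalSpace X] [T2Space X] [ConnectedSpace X]
    [LocallyConnectedSpace X] [LocallyCompactSpace X]
    (K : Set X) (hK : IsCompact K) :
    ∃ K' : Set X, IsCompact K' ∧ IsConnected K' ∧ K ⊆ K' :=
  statement18_general K hK
end

section
/- Let X be a connected, locally connected, locally compact Hausdorff space and K ⊆ X compact. Then the set of unbounded connected components of X − K (those whose closure in X is not compact) is finite. -/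
open Set Topology

/-- for `K` compact in a connected, locally connected, locally compact
Hausdorff space `X`, the set of unbounded connected components of `X − K`
(those whose closure is not compact) is finite. -/
theorem statement19 {X : Type*} [TopologicalSpace X] [T2Space X] [ConnectedSpace X]
    [LocallyConnectedSpace X] [LocallyCompactSpace X]
    (K : Set X) (hK : IsCompact K) :
    {C : Set X | (∃ x ∈ Kᶜ, C = connectedComponentIn Kᶜ x) ∧
      ¬IsCompact (closure C)}.Finite := by
  classical
  set U := Kᶜ with hU
  have hUopen : IsOpen U := hK.isClosed.isOpen_compl
  obtain ⟨L₀, hL₀c, hKL₀⟩ := exists_compact_superset hK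
  obtain ⟨x₀⟩ : Nonempty X := inferInstance
  obtain ⟨M, hMc, hMx⟩ := exists_compact_mem_nhds x₀
  set L := L₀ ∪ M with hL
  have hLc : IsCompact L := hL₀c.union hMc
  have hLcl : IsClosed L := hLc.isClosed
  have hKint : K ⊆ interior L := hKL₀.trans (interior_mono subset_union_left)
  have hLne : L.Nonempty := ⟨x₀, Or.inr (mem_of_mem_nhds hMx)⟩
  have hFc : IsCompact (frontier L) :=
    hLc.of_isClosed_subset isClosed_frontier
      (frontier_subset_closure.trans hLcl.closure_eq.subset)
  have hFU : frontier L ⊆ U := by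
    intro y hy
    have hy' : y ∉ interior L := by
      rw [hLcl.frontier_eq] at hy; exact hy.2
    exact fun hyK => hy' (hKint hyK)
  obtain ⟨t, ht⟩ := hFc.elim_finite_subcover (fun x => connectedComponentIn U x)
    (fun x => hUopen.connectedComponentIn)
    (fun y hy => mem_iUnion.2 ⟨y, mem_connectedComponentIn (hFU hy)⟩)
  refine ((t.finite_toSet.image (fun x => connectedComponentIn U x)).subset ?_)
  rintro C ⟨⟨x, hx, rfl⟩, hnc⟩
  set C := connectedComponentIn U x with hC
  have hCopen : IsOpen C := hUopen.connectedComponentIn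
  have hCne : C.Nonempty := ⟨x, mem_connectedComponentIn hx⟩
  -- C must meet the frontier F
  have hmeet : (C ∩ frontier L).Nonempty := by
    by_contra hdis
    rw [not_nonempty_iff_eq_empty] at hdis
    have hsub : C ⊆ interior L ∪ Lᶜ := by
      intro y hy
      by_cases hyL : y ∈ L
      · left
        by_contra hnot
        have : y ∈ C ∩ frontier L := ⟨hy, by rw [hLcl.frontier_eq]; exact ⟨hyL, hnot⟩⟩
        rw [hdis] at this; exact this
      · exact Or.inr hyL
    have hdisj : Disjoint (interior L) Lᶜ :=
      disjoint_compl_right.mono_left interior_subset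
    rcases isPreconnected_connectedComponentIn.subset_or_subset
        isOpen_interior hLcl.isOpen_compl hdisj hsub with h1 | h2
    · -- C inside L : closure compact, contradiction
      exact hnc (hLc.of_isClosed_subset isClosed_closure
        (closure_minimal (h1.trans interior_subset) hLcl))
    · -- C avoids L : C is clopen, so C = univ, contradicting L nonempty
      have key : ∀ y ∈ closure C, y ∈ U → y ∈ C := by
        intro y hy hyU
        have hnbhd : connectedComponentIn U y ∈ 𝓝 y :=
          hUopen.connectedComponentIn.mem_nhds (mem_connectedComponentIn hyU)
        obtain ⟨z, hz1, hz2⟩ := mem_closure_iff_nhds.1 hy _ hnbhd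
        have e1 : connectedComponentIn U y = connectedComponentIn U z :=
          connectedComponentIn_eq hz1
        have e2 : connectedComponentIn U x = connectedComponentIn U z :=
          connectedComponentIn_eq hz2
        have : connectedComponentIn U y = C := by rw [e1, hC, e2]
        rw [← this]; exact mem_connectedComponentIn hyU
      have hfr : frontier C = ∅ := by
        rw [eq_empty_iff_forall_notMem]
        intro y hy
        have hyc : y ∈ closure C := hy.1
        have hynC : y ∉ C := by
          simpa [hCopen.interior_eq] using hy.2
        have hyK : y ∈ K := by
          by_contra hyK
          exact hynC (key y hyc hyK)
        have h3 : y ∈ interior L := hKint hyK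
        have h4 : y ∈ closure Lᶜ := closure_mono h2 hyc
        rw [closure_compl] at h4
        exact h4 h3
      have hclopen : IsClopen C := isClopen_iff_frontier_eq_empty.2 hfr
      have : C = univ := hclopen.eq_univ hCne
      obtain ⟨w, hw⟩ := hLne
      have : w ∈ Lᶜ := h2 (this ▸ mem_univ w)
      exact this hw
  obtain ⟨y, hyC, hyF⟩ := hmeet
  obtain ⟨z, hz⟩ := mem_iUnion₂.1 (ht hyF)
  refine ⟨z, hz.1, ?_⟩
  show connectedComponentIn U z = C
  have e1 : connectedComponentIn U z = connectedComponentIn U y :=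
    connectedComponentIn_eq hz.2
  have e2 : connectedComponentIn U x = connectedComponentIn U y :=
    connectedComponentIn_eq hyC
  rw [e1, ← e2]
end
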